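/- arXiv:2103.05030 — 2 statements merged into one kernel-verified Lean document; each statement's English description precedes it below -/
import Mathlib

section
/- For every n, every tuple z = (z_1,...,z_n) of strings over Σ, and every tuple y = (y_1,...,y_n) of strings over Σ, the n-Substitution Loss Function satisfies L_nS(z,y) = -log rho_{N_nS}(y|z), where rho_{N_nS}(y|z) is the probability that the n-Substitution Noise Source corrupts z to y (with the convention -log 0 = +infinity). Consequently, for every finite nonempty set G of programs with string-tuple outputs, prior rho_p, and data (x,y) with positive marginal probability, the minimizers over c in G[x] of L_nS(c,y) - log rho_p(G_{x,c}) are exactly the maximizers over c in G[x] of rho_p(G_{x,c})*rho_{N_nS}(y|c); that is, L_nS is the optimal loss function for the n-Substitution Noise Source. -/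
/-!
STATEMENT 8: The n-Substitution Loss Function is the optimal loss function for
the n-Substitution Noise Source: `L_nS(z,y) = -log ρ_{N_nS}(y|z)` for all
string tuples `z, y` (with `-log 0 = +∞`), and consequently, for every finite
nonempty program set `G`, prior `ρp`, and data `(x,y)` with positive marginal
probability, the minimizers of `L_nS(c,y) - log ρp(G_{x,c})` over `c ∈ G[x]`
are exactly the maximizers of `ρp(G_{x,c}) * ρ_{N_nS}(y|c)`.
-/

attribute [local instance] Classical.propDecidable

/-- `-log r`, with the convention `-log 0 = +∞`, valued in `ℝ ∪ {+∞}`. -/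
noncomputable def negLog (r : ℝ) : WithTop ℝ :=
  if r = 0 then ⊤ else (((-Real.log r) : ℝ) : WithTop ℝ)

/-- `progOut p x = p[x]`, the vector of outputs of program `p` on inputs `x`. -/
def progOut {X Y : Type*} {n : ℕ} (p : X → Y) (x : Fin n → X) : Fin n → Y :=
  fun i => p (x i)

/-- Per-example probability that the n-Substitution Noise Source (parameter `δ`;
`k = |Σ| - 1` is the number of alternative characters) corrupts string `s` into
string `t`: each character is kept with probability `1 - δ` and otherwise
replaced by a uniformly random one of the other `k` characters. -/
noncomputable def subNoise {A : Type*} [DecidableEq A] (δ k : ℝ) : List A → List A → ℝ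
  | [], [] => 1
  | a :: s, b :: t => (if b = a then 1 - δ else δ / k) * subNoise δ k s t
  | [], _ :: _ => 0
  | _ :: _, [] => 0

/-- Per-example n-Substitution loss: `+∞` if the lengths differ, otherwise the
sum over positions of `-log(1-δ)` for matches and `-log(δ/k)` for mismatches. -/
noncomputable def subLoss {A : Type*} [DecidableEq A] (δ k : ℝ) : List A → List A → WithTop ℝ
  | [], [] => 0
  | a :: s, b :: t =>
      (if b = a then ((-Real.log (1 - δ) : ℝ) : WithTop ℝ)
       else ((-Real.log (δ / k) : ℝ) : WithTop ℝ)) + subLoss δ k s t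
  | [], _ :: _ => ⊤
  | _ :: _, [] => ⊤

lemma negLog_one : negLog 1 = 0 := by
  simp [negLog]

lemma negLog_mul {a b : ℝ} (ha : 0 ≤ a) (hb : 0 ≤ b) :
    negLog (a * b) = negLog a + negLog b := by
  rcases eq_or_lt_of_le ha with h | h
  · simp [negLog, ← h]
  rcases eq_or_lt_of_le hb with h' | h'
  · simp [negLog, ← h']
  have hab : a * b ≠ 0 := by positivity
  simp only [negLog, if_neg hab, if_neg h.ne', if_neg h'.ne']
  rw [Real.log_mul h.ne' h'.ne']
  push_cast
  norm_cast
  ring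

lemma negLog_le_negLog {a b : ℝ} (ha : 0 ≤ a) (hb : 0 ≤ b) :
    negLog a ≤ negLog b ↔ b ≤ a := by
  rcases eq_or_lt_of_le ha with h | h
  · simp only [negLog, ← h, if_pos rfl]
    constructor
    · intro hle
      rcases eq_or_lt_of_le hb with h' | h'
      · exact le_of_eq h'.symm
      · simp only [if_neg h'.ne', top_le_iff] at hle
        exact absurd hle (by simp)
    · intro hle
      have : b = 0 := le_antisymm hle hb
      simp [this]
  rcases eq_or_lt_of_le hb with h' | h'
  · simp [negLog, ← h', if_neg h.ne', le_top, h.le]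
  simp only [negLog, if_neg h.ne', if_neg h'.ne', WithTop.coe_le_coe, neg_le_neg_iff]
  exact Real.log_le_log_iff h' h

lemma negLog_prod {ι : Type*} (s : Finset ι) (f : ι → ℝ) (hf : ∀ i ∈ s, 0 ≤ f i) :
    negLog (∏ i ∈ s, f i) = ∑ i ∈ s, negLog (f i) := by
  induction s using Finset.cons_induction with
  | empty => simp [negLog_one]
  | cons a s has ih =>
      rw [Finset.prod_cons, Finset.sum_cons,
        negLog_mul (hf a (Finset.mem_cons_self a s))
          (Finset.prod_nonneg fun i hi => hf i (Finset.mem_cons_of_mem hi)),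
        ih fun i hi => hf i (Finset.mem_cons_of_mem hi)]

lemma subNoise_nonneg {A : Type*} [DecidableEq A] {δ k : ℝ} (hδ0 : 0 ≤ δ) (hδ1 : δ ≤ 1)
    (hk : 0 ≤ k) : ∀ s t : List A, 0 ≤ subNoise δ k s t
  | [], [] => by simp [subNoise]
  | a :: s, b :: t => by
      rw [subNoise]
      apply mul_nonneg _ (subNoise_nonneg hδ0 hδ1 hk s t)
      split <;> [linarith; positivity]
  | [], _ :: _ => by rw [subNoise]
  | _ :: _, [] => by rw [subNoise]

lemma subLoss_eq_negLog {A : Type*} [DecidableEq A] {δ k : ℝ} (hδ0 : 0 < δ) (hδ1 : δ < 1)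
    (hk : 0 < k) : ∀ s t : List A, subLoss δ k s t = negLog (subNoise δ k s t)
  | [], [] => by simp [subLoss, subNoise, negLog_one]
  | [], b :: t => by simp [subLoss, subNoise, negLog]
  | a :: s, [] => by simp [subLoss, subNoise, negLog]
  | a :: s, b :: t => by
      rw [subLoss, subNoise, negLog_mul (by split <;> [linarith; positivity])
        (subNoise_nonneg hδ0.le hδ1.le hk.le s t),
        subLoss_eq_negLog hδ0 hδ1 hk s t]
      congr 1
      by_cases h : b = a
      · have h1 : (1 : ℝ) - δ ≠ 0 := by linarith
        simp [negLog, h, h1]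
      · have h1 : δ / k ≠ 0 := by positivity
        simp [negLog, h, h1]

theorem stmt8 {A X : Type*} [Fintype A] [DecidableEq A] [Countable X]
    (hA : 2 ≤ Fintype.card A)
    (δ : ℝ) (hδ0 : 0 < δ) (hδ1 : δ < 1) :
    -- (a) `L_nS(z,y) = -log ρ_{N_nS}(y|z)` for all string tuples `z, y`
    (∀ (n : ℕ) (z y : Fin n → List A),
      (∑ i : Fin n, subLoss δ ((Fintype.card A : ℝ) - 1) (z i) (y i))
        = negLog (∏ i : Fin n, subNoise δ ((Fintype.card A : ℝ) - 1) (z i) (y i)))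
    ∧
    -- (b) consequently `L_nS` is the optimal loss function for `N_nS`
    (∀ (n : ℕ) (G : Finset (X → List A)), G.Nonempty →
      ∀ (ρp : (X → List A) → ℝ), (∀ q, 0 ≤ ρp q) → (∑ q ∈ G, ρp q = 1) →
      ∀ (x : Fin n → X) (y : Fin n → List A),
      0 < (∑ c ∈ G.image (fun q => progOut q x),
          (∑ q ∈ G.filter (fun q => progOut q x = c), ρp q) *
            ∏ i : Fin n, subNoise δ ((Fintype.card A : ℝ) - 1) (c i) (y i)) →
      ∀ cstar ∈ G.image (fun q => progOut q x),
      ((∀ c ∈ G.image (fun q => progOut q x),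
          (∑ i : Fin n, subLoss δ ((Fintype.card A : ℝ) - 1) (cstar i) (y i)) +
              negLog (∑ q ∈ G.filter (fun q => progOut q x = cstar), ρp q)
            ≤ (∑ i : Fin n, subLoss δ ((Fintype.card A : ℝ) - 1) (c i) (y i)) +
              negLog (∑ q ∈ G.filter (fun q => progOut q x = c), ρp q))
        ↔
        (∀ c ∈ G.image (fun q => progOut q x),
          (∑ q ∈ G.filter (fun q => progOut q x = c), ρp q) *
              ∏ i : Fin n, subNoise δ ((Fintype.card A : ℝ) - 1) (c i) (y i)
            ≤ (∑ q ∈ G.filter (fun q => progOut q x = cstar), ρp q) *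
              ∏ i : Fin n, subNoise δ ((Fintype.card A : ℝ) - 1) (cstar i) (y i)))) := by
  set k : ℝ := (Fintype.card A : ℝ) - 1 with hk
  have hkpos : 0 < k := by
    have : (2 : ℝ) ≤ (Fintype.card A : ℝ) := by exact_mod_cast hA
    simp [hk]; linarith
  have parta : ∀ (n : ℕ) (z y : Fin n → List A),
      (∑ i : Fin n, subLoss δ k (z i) (y i)) = negLog (∏ i : Fin n, subNoise δ k (z i) (y i)) := by
    intro n z y
    rw [negLog_prod _ _ (fun i _ => subNoise_nonneg hδ0.le hδ1.le hkpos.le _ _)]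
    exact Finset.sum_congr rfl fun i _ => subLoss_eq_negLog hδ0 hδ1 hkpos _ _
  refine ⟨parta, ?_⟩
  intro n G hG ρp hρp hρpsum x y hpos cstar hcstar
  set w : (Fin n → List A) → ℝ := fun c => ∑ q ∈ G.filter (fun q => progOut q x = c), ρp q with hw
  set P : (Fin n → List A) → ℝ := fun c => ∏ i : Fin n, subNoise δ k (c i) (y i) with hP
  have hwnn : ∀ c, 0 ≤ w c := fun c => Finset.sum_nonneg fun q _ => hρp q
  have hPnn : ∀ c, 0 ≤ P c :=
    fun c => Finset.prod_nonneg fun i _ => subNoise_nonneg hδ0.le hδ1.le hkpos.le _ _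
  have key : ∀ c, (∑ i : Fin n, subLoss δ k (c i) (y i)) + negLog (w c)
      = negLog (w c * P c) := by
    intro c
    rw [parta n c y, negLog_mul (hwnn c) (hPnn c), add_comm]
  constructor
  · intro h c hc
    have := h c hc
    rw [key, key, negLog_le_negLog (mul_nonneg (hwnn cstar) (hPnn cstar))
      (mul_nonneg (hwnn c) (hPnn c))] at this
    exact this
  · intro h c hc
    rw [key, key, negLog_le_negLog (mul_nonneg (hwnn cstar) (hPnn cstar))
      (mul_nonneg (hwnn c) (hPnn c))]
    exact h c hc
end

section
/- For every n, every tuple z_h = (z_{h,1},...,z_{h,n}) of nonempty strings over Σ, every γ > 0, and every ε with 1 ≤ ε ≤ n, the probability, under y sampled from the 1-Delete Noise Source applied to z_h, that every tuple z of strings with d_l(z,z_h) ≥ ε satisfies L_nS(z,y) > L_nS(z_h,y) + γ equals (1-δ)^n (the probability that no deletion occurs). Consequently, the 1-Delete Noise Source is not differentiating with respect to the length distance d_l and the n-Substitution Loss Function L_nS. -/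
/-!
STATEMENT 18: For every `n`, every tuple `z_h` of nonempty strings, every
`γ > 0`, and every `ε` with `1 ≤ ε ≤ n`, the probability, under `y` sampled
from the 1-Delete Noise Source applied to `z_h`, that every tuple `z` with
`d_l(z,z_h) ≥ ε` satisfies `L_nS(z,y) > L_nS(z_h,y) + γ`, equals `(1-δ)^n`
(the probability that no deletion occurs).  Consequently, the 1-Delete Noise
Source is not differentiating with respect to the length distance `d_l` and
the n-Substitution Loss Function `L_nS`.
-/

attribute [local instance] Classical.propDecidable

/-- The number of positions of `s` whose deletion yields `t`. -/
def delCount {A : Type*} [DecidableEq A] (s t : List A) : ℕ :=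
  ((Finset.range s.length).filter (fun j => s.eraseIdx j = t)).card

/-- Per-example probability that the 1-Delete Noise Source (parameter `δ`)
corrupts string `s` into string `t`. -/
noncomputable def delNoise {A : Type*} [DecidableEq A] (δ : ℝ) (s t : List A) : ℝ :=
  if s = [] then (if t = [] then 1 else 0)
  else (if t = s then 1 - δ else 0) + δ * (delCount s t : ℝ) / (s.length : ℝ)

/-- Length distance: the number of indices at which the string lengths differ. -/
def lenDist {A : Type*} {n : ℕ} (z z' : Fin n → List A) : ℕ :=
  (Finset.univ.filter (fun i : Fin n => (z i).length ≠ (z' i).length)).card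

lemma subLoss_self_ne_top {A : Type*} [DecidableEq A] (δ k : ℝ) (s : List A) :
    subLoss δ k s s ≠ ⊤ := by
  induction s with
  | nil => simp [subLoss]
  | cons a s ih =>
    simp only [subLoss, if_pos rfl]
    exact WithTop.add_ne_top.2 ⟨WithTop.coe_ne_top, ih⟩

lemma subLoss_eq_top {A : Type*} [DecidableEq A] (δ k : ℝ) :
    ∀ (s t : List A), s.length ≠ t.length → subLoss δ k s t = ⊤ := by
  intro s
  induction s with
  | nil => intro t h; cases t with
    | nil => simp at h
    | cons b t => simp [subLoss]
  | cons a s ih =>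
    intro t h
    cases t with
    | nil => simp [subLoss]
    | cons b t =>
      have : s.length ≠ t.length := by simpa using h
      simp [subLoss, ih t this]

lemma delCount_eq_zero {A : Type*} [DecidableEq A] (s t : List A)
    (h : s.length = t.length) : delCount s t = 0 := by
  rw [delCount, Finset.card_eq_zero, Finset.filter_eq_empty_iff]
  intro j hj heq
  have hj' := Finset.mem_range.1 hj
  have := List.length_eraseIdx_of_lt hj'
  rw [heq, ← h] at this
  omega

lemma length_of_delNoise_ne {A : Type*} [DecidableEq A] {δ : ℝ} {s t : List A}
    (hs : s ≠ []) (hst : t ≠ s) (h : delNoise δ s t ≠ 0) : t.length ≠ s.length := by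
  intro hl
  apply h
  rw [delNoise, if_neg hs, if_neg hst, delCount_eq_zero s t hl.symm]
  simp

lemma delNoise_self {A : Type*} [DecidableEq A] (δ : ℝ) {s : List A} (hs : s ≠ []) :
    delNoise δ s s = 1 - δ := by
  rw [delNoise, if_neg hs, if_pos rfl, delCount_eq_zero s s rfl]
  simp

lemma key {A : Type*} [Fintype A] [DecidableEq A]
    (δ : ℝ) (hδ1 : δ < 1) (n : ℕ) (zh : Fin n → List A) (hzh : ∀ i, zh i ≠ [])
    (γ : ℝ) (ε : ℝ) (hε0 : 0 < ε) (hεn : ε ≤ (n : ℝ)) :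
    (∑' y : Fin n → List A,
        (if ∀ z : Fin n → List A, ε ≤ (lenDist z zh : ℝ) →
            (∑ i : Fin n, subLoss δ ((Fintype.card A : ℝ) - 1) (zh i) (y i)) + (γ : WithTop ℝ)
              < ∑ i : Fin n, subLoss δ ((Fintype.card A : ℝ) - 1) (z i) (y i)
         then ∏ i : Fin n, delNoise δ (zh i) (y i) else 0)) = (1 - δ) ^ n := by
  set k : ℝ := (Fintype.card A : ℝ) - 1 with hk
  rw [tsum_eq_single zh ?_]
  · rw [if_pos ?_]
    · rw [Finset.prod_congr rfl (fun i _ => delNoise_self δ (hzh i)), Finset.prod_const,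
        Finset.card_univ, Fintype.card_fin]
    · intro z hz
      have hld : lenDist z zh ≠ 0 := by
        intro h0
        rw [h0] at hz
        norm_num at hz
        linarith
      obtain ⟨i, hi⟩ := Finset.card_pos.mp (Nat.pos_of_ne_zero hld)
      have hi' : (z i).length ≠ (zh i).length := (Finset.mem_filter.1 hi).2
      have hr : ∑ i : Fin n, subLoss δ k (z i) (zh i) = ⊤ :=
        WithTop.sum_eq_top.2 ⟨i, Finset.mem_univ i, subLoss_eq_top δ k _ _ hi'⟩
      rw [hr]
      refine lt_top_iff_ne_top.2 (WithTop.add_ne_top.2 ⟨?_, WithTop.coe_ne_top⟩)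
      exact WithTop.sum_ne_top.2 fun i _ => subLoss_self_ne_top δ k (zh i)
  · intro y hy
    by_cases hc : ∀ z : Fin n → List A, ε ≤ (lenDist z zh : ℝ) →
        (∑ i : Fin n, subLoss δ k (zh i) (y i)) + (γ : WithTop ℝ)
          < ∑ i : Fin n, subLoss δ k (z i) (y i)
    · rw [if_pos hc]
      have hld : lenDist (fun _ => ([] : List A)) zh = n := by
        rw [lenDist, Finset.filter_true_of_mem, Finset.card_univ, Fintype.card_fin]
        intro i _
        simpa using fun h => hzh i (List.length_eq_zero_iff.mp h.symm)
      have hc' := hc (fun _ => []) (by rw [hld]; exact hεn)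
      have hfin : ∑ i : Fin n, subLoss δ k (zh i) (y i) ≠ ⊤ := by
        intro ht
        rw [ht, top_add] at hc'
        exact (not_top_lt hc')
      have hlen : ∀ i, (y i).length = (zh i).length := by
        intro i
        by_contra hne
        exact WithTop.sum_ne_top.1 hfin i (Finset.mem_univ i)
          (subLoss_eq_top δ k _ _ (fun h => hne h.symm))
      obtain ⟨i0, hi0⟩ := Function.ne_iff.1 hy
      refine Finset.prod_eq_zero (Finset.mem_univ i0) ?_
      by_contra hne
      exact length_of_delNoise_ne (hzh i0) hi0 hne (by rw [hlen i0])
    · rw [if_neg hc]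

theorem stmt18 {A : Type*} [Fintype A] [DecidableEq A] (hA : 2 ≤ Fintype.card A)
    (δ : ℝ) (hδ0 : 0 < δ) (hδ1 : δ < 1) :
    -- the probability of the separating event is exactly `(1-δ)^n`
    (∀ (n : ℕ) (zh : Fin n → List A), (∀ i, zh i ≠ []) →
      ∀ γ > (0 : ℝ), ∀ ε : ℝ, 1 ≤ ε → ε ≤ (n : ℝ) →
      (∑' y : Fin n → List A,
        (if ∀ z : Fin n → List A, ε ≤ (lenDist z zh : ℝ) →
            (∑ i : Fin n, subLoss δ ((Fintype.card A : ℝ) - 1) (zh i) (y i)) + (γ : WithTop ℝ)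
              < ∑ i : Fin n, subLoss δ ((Fintype.card A : ℝ) - 1) (z i) (y i)
         then ∏ i : Fin n, delNoise δ (zh i) (y i) else 0)) = (1 - δ) ^ n)
    ∧
    -- consequently, the 1-Delete Noise Source is not differentiating
    -- w.r.t. `d_l` and `L_nS`
    ¬ (∀ γ > (0 : ℝ), ∀ δ' > (0 : ℝ), ∃ εN > (0 : ℝ), ∃ nN : ℕ, ∀ n ≥ nN,
        ∀ zh : Fin n → List A,
        1 - δ' ≤ ∑' y : Fin n → List A,
          (if ∀ z : Fin n → List A, εN ≤ (lenDist z zh : ℝ) →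
              (∑ i : Fin n, subLoss δ ((Fintype.card A : ℝ) - 1) (zh i) (y i)) + (γ : WithTop ℝ)
                < ∑ i : Fin n, subLoss δ ((Fintype.card A : ℝ) - 1) (z i) (y i)
           then ∏ i : Fin n, delNoise δ (zh i) (y i) else 0)) := by
  constructor
  · intro n zh hzh γ hγ ε hε1 hεn
    exact key δ hδ1 n zh hzh γ ε (lt_of_lt_of_le one_pos hε1) hεn
  · intro h
    obtain ⟨εN, hεN, nN, hn⟩ := h 1 one_pos (δ / 2) (by positivity)
    obtain ⟨a⟩ : Nonempty A := Fintype.card_pos_iff.1 (by omega)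
    set n : ℕ := max nN (max 1 ⌈εN⌉₊) with hndef
    have h1n : 1 ≤ n := le_trans (le_max_left 1 _) (le_max_right nN _)
    have hcn : ⌈εN⌉₊ ≤ n := le_trans (le_max_right 1 _) (le_max_right nN _)
    have hεn : εN ≤ (n : ℝ) := le_trans (Nat.le_ceil εN) (by exact_mod_cast hcn)
    have hle := hn n (le_max_left _ _) (fun _ => [a])
    have hkey := key δ hδ1 n (fun _ => [a]) (fun i => by simp) 1 εN hεN hεn
    rw [hkey] at hle
    have hpow : (1 - δ) ^ n ≤ (1 - δ) ^ 1 :=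
      pow_le_pow_of_le_one (by linarith) (by linarith) h1n
    rw [pow_one] at hpow
    linarith
end
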